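/- Let B and B' be two ℤ[v,v⁻¹]-bases of K such that: both B and B' are asymptotically orthonormal; β(b) = b for every b ∈ B and β(b') = b' for every b' ∈ B'; every coefficient of the Laurent series (b₁‖b₂) is nonnegative for all b₁, b₂ ∈ B, and likewise every coefficient of (b₁'‖b₂') is nonnegative for all b₁', b₂' ∈ B'; the graph with vertex set B having an edge between distinct b₁, b₂ whenever (b₁‖b₂) ≠ 0 is connected; and B ∩ B' is nonempty. Then B = B'. -/

import Mathlib

open LaurentPolynomial

/-- The ring `ℤ((v⁻¹))` of formal Laurent series in `v⁻¹`, realized as Hahn series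
`HahnSeries ℤ ℤ` where the exponent `k` records the coefficient of `v⁻ᵏ`. -/
abbrev LaurentSeriesVinv : Type := HahnSeries ℤ ℤ

/-- The image of the variable `v` in `ℤ((v⁻¹))`. -/
noncomputable def vSer : LaurentSeriesVinv := HahnSeries.single (-1 : ℤ) (1 : ℤ)

/-- `f` lies in `v⁻¹ℤ[[v⁻¹]]`: the coefficient of `vⁿ` vanishes for all `n ≥ 0`. -/
def MemVinvIntPowerSeries (f : LaurentSeriesVinv) : Prop :=
  ∀ k : ℤ, k ≤ 0 → f.coeff k = 0

/-- `f` lies in `1 + v⁻¹ℤ[[v⁻¹]]`. -/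
def MemOnePlusVinv (f : LaurentSeriesVinv) : Prop :=
  f.coeff 0 = 1 ∧ ∀ k : ℤ, k < 0 → f.coeff k = 0

/-!
Write a `β`-fixed element `x` with `(x‖x) ∈ 1 + v⁻¹ℤ[[v⁻¹]]` as `x = Σ cᵢ bᵢ` in an
asymptotically orthonormal `β`-fixed basis. The coefficients `cᵢ` are bar-invariant, and if `N` is
their top degree, then the coefficient of `v^{2N}` in `(x‖x)` is `Σ cᵢ(N)² > 0`, which forces
`N = 0`; then `Σ cᵢ(0)² = 1`, so `x = ±bᵢ`. Hence each basis is contained in `±` the other. Along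
an edge of the pairing graph the two signs agree, since `(b₁‖b₂)` and `-(b₁‖b₂)` cannot both have
nonnegative coefficients unless they vanish; connectedness and the common element then make all
signs `+`.
-/

-- `T n = vⁿ` is sent to `vⁿ`, which sits at exponent `-n` in `LaurentSeriesVinv`.
noncomputable def toLaurentSeriesVinv : ℤ[T;T⁻¹] →+* LaurentSeriesVinv :=
  (AddMonoidAlgebra.lift ℤ LaurentSeriesVinv ℤ
    { toFun := fun n => HahnSeries.single (-n.toAdd) 1
      map_one' := by simp
      map_mul' := fun m n => by simp [HahnSeries.single_mul_single, add_comm] }).toRingHom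

lemma toLaurentSeriesVinv_single (n a : ℤ) :
    toLaurentSeriesVinv (AddMonoidAlgebra.single n a) = HahnSeries.single (-n) a := by
  rw [toLaurentSeriesVinv, AlgHom.toRingHom_eq_coe, RingHom.coe_coe, AddMonoidAlgebra.lift_single,
    MonoidHom.coe_mk, OneHom.coe_mk, toAdd_ofAdd, Algebra.smul_def, eq_intCast,
    ← HahnSeries.single_zero_intCast, HahnSeries.single_mul_single, zero_add, Int.cast_id, mul_one]

lemma coeff_toLaurentSeriesVinv (c : ℤ[T;T⁻¹]) (k : ℤ) :
    (toLaurentSeriesVinv c).coeff k = c.coeff (-k) := by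
  induction c using LaurentPolynomial.induction_on' with
  | add f g hf hg => simp [hf, hg]
  | C_mul_T n a =>
    rw [← single_eq_C_mul_T, toLaurentSeriesVinv_single, HahnSeries.coeff_single,
      AddMonoidAlgebra.coeff_single, Finsupp.single_apply]
    split_ifs <;> omega

lemma toLaurentSeriesVinv_T_one : toLaurentSeriesVinv (T 1) = vSer :=
  toLaurentSeriesVinv_single 1 1

theorem map_smul_of_map_T_one_smul {K S M : Type*} [AddCommGroup K] [Module ℤ[T;T⁻¹] K]
    [Ring S] [AddCommGroup M] [Module S M] (σ : ℤ[T;T⁻¹] →+* S) (f : K →+ M)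
    (hf : ∀ x, f ((T 1 : ℤ[T;T⁻¹]) • x) = σ (T 1) • f x) (c : ℤ[T;T⁻¹]) (x : K) :
    f (c • x) = σ c • f x := by
  have hmul : ∀ {c d : ℤ[T;T⁻¹]}, (∀ x : K, f (c • x) = σ c • f x) →
      (∀ x : K, f (d • x) = σ d • f x) → ∀ x : K, f ((c * d) • x) = σ (c * d) • f x := by
    intro c d hc hd x
    rw [mul_smul, hc, hd, ← mul_smul, ← map_mul]
  have hinv : ∀ x : K, f ((T (-1) : ℤ[T;T⁻¹]) • x) = σ (T (-1)) • f x := fun x => by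
    have h := hf ((T (-1) : ℤ[T;T⁻¹]) • x)
    rw [← mul_smul, ← T_add, add_neg_cancel, T_zero, one_smul] at h
    rw [h, ← mul_smul, ← map_mul, ← T_add, neg_add_cancel, T_zero, map_one, one_smul]
  have hT : ∀ n : ℤ, ∀ x : K, f ((T n : ℤ[T;T⁻¹]) • x) = σ (T n) • f x := fun n => by
    induction n using Int.induction_on with
    | zero => simp
    | succ n ih => rw [T_add]; exact hmul ih hf
    | pred n ih => rw [sub_eq_add_neg, T_add]; exact hmul ih hinv
  induction c using LaurentPolynomial.induction_on' generalizing x with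
  | add c d hc hd => rw [add_smul, map_add, hc, hd, map_add, add_smul]
  | C_mul_T n a =>
    refine hmul (fun x => ?_) (hT n) x
    rw [eq_intCast, Int.cast_smul_eq_zsmul, map_zsmul, map_intCast, Int.cast_smul_eq_zsmul]

noncomputable def AddMonoidHom.toSemilinearOfMapTOneSmul {K S M : Type*} [AddCommGroup K]
    [Module ℤ[T;T⁻¹] K] [Ring S] [AddCommGroup M] [Module S M] (σ : ℤ[T;T⁻¹] →+* S) (f : K →+ M)
    (hf : ∀ x, f ((T 1 : ℤ[T;T⁻¹]) • x) = σ (T 1) • f x) : K →ₛₗ[σ] M :=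
  { f with map_smul' := map_smul_of_map_T_one_smul σ f hf }

noncomputable def LinearMap.toVinvBilinear {K : Type*} [AddCommGroup K] [Module ℤ[T;T⁻¹] K]
    (p : K →ₗ[ℤ] K →ₗ[ℤ] LaurentSeriesVinv)
    (hp₁ : ∀ x y : K, p ((T 1 : ℤ[T;T⁻¹]) • x) y = vSer * p x y)
    (hp₂ : ∀ x y : K, p x ((T 1 : ℤ[T;T⁻¹]) • y) = vSer * p x y) :
    K →ₛₗ[toLaurentSeriesVinv] K →ₛₗ[toLaurentSeriesVinv] LaurentSeriesVinv :=
  LinearMap.mk₂'ₛₗ _ _ (fun x y => p x y) (fun _ _ _ => by simp)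
    (fun c x y => map_smul_of_map_T_one_smul _ (p.flip y).toAddMonoidHom
      (fun x => by simpa [toLaurentSeriesVinv_T_one] using hp₁ x y) c x)
    (fun _ _ _ => by simp)
    (fun c x => map_smul_of_map_T_one_smul _ (p x).toAddMonoidHom
      (fun y => by simpa [toLaurentSeriesVinv_T_one] using hp₂ x y) c)

theorem HahnSeries.coeff_mul_add_of_le_orderTop {Γ R : Type*} [AddCommMonoid Γ] [LinearOrder Γ]
    [IsOrderedCancelAddMonoid Γ] [NonUnitalNonAssocSemiring R] {f g : HahnSeries Γ R} {a b : Γ}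
    (ha : (a : WithTop Γ) ≤ f.orderTop) (hb : (b : WithTop Γ) ≤ g.orderTop) :
    (f * g).coeff (a + b) = f.coeff a * g.coeff b := by
  rw [HahnSeries.coeff_mul, Finset.sum_eq_single (a, b)]
  · rintro ⟨i, j⟩ hij hne
    have hsum : i + j = a + b := (Finset.mem_antidiagonal.1 hij).2.2
    rcases lt_or_ge i a with hi | hi
    · rw [coeff_eq_zero_of_lt_orderTop ((WithTop.coe_lt_coe.2 hi).trans_le ha), zero_mul]
    rcases lt_or_ge j b with hj | hj
    · rw [coeff_eq_zero_of_lt_orderTop ((WithTop.coe_lt_coe.2 hj).trans_le hb), mul_zero]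
    have hi' : i = a := le_antisymm (not_lt.1 fun h => (add_lt_add_of_lt_of_le h hj).ne' hsum) hi
    have hj' : j = b := le_antisymm (not_lt.1 fun h => (add_lt_add_of_le_of_lt hi h).ne' hsum) hj
    exact absurd (by rw [hi', hj']) hne
  · intro h
    simp only [Finset.mem_antidiagonal, mem_support, and_true, not_and_or, not_not] at h
    rcases h with h | h <;> simp [h]

theorem HahnSeries.eq_zero_of_eq_neg_of_coeff_nonneg {Γ R : Type*} [PartialOrder Γ]
    [AddCommGroup R] [PartialOrder R] [IsOrderedAddMonoid R] {f g : HahnSeries Γ R}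
    (hf : ∀ k, 0 ≤ f.coeff k) (hg : ∀ k, 0 ≤ g.coeff k) (h : f = -g) : f = 0 := by
  ext k
  have hk := congrArg (coeff · k) h
  simp only [coeff_neg] at hk
  exact le_antisymm (hk ▸ neg_nonpos.2 (hg k)) (hf k)

theorem Finset.exists_sq_eq_one_of_sum_sq_eq_one {ι : Type*} {s : Finset ι} {a : ι → ℤ}
    (h : ∑ i ∈ s, a i ^ 2 = 1) : ∃ i ∈ s, a i ^ 2 = 1 ∧ ∀ j ∈ s, j ≠ i → a j = 0 := by
  classical
  obtain ⟨i, hi, hai⟩ : ∃ i ∈ s, a i ≠ 0 := by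
    by_contra! h0
    rw [Finset.sum_eq_zero fun i hi => by rw [h0 i hi, sq, mul_zero]] at h
    exact zero_ne_one h
  have hsplit := Finset.add_sum_erase s (fun i => a i ^ 2) hi
  have hrest : 0 ≤ ∑ j ∈ s.erase i, a j ^ 2 := Finset.sum_nonneg fun j _ => sq_nonneg _
  have hai' : 0 < a i ^ 2 := sq_pos_iff.2 hai
  have hrest0 : ∑ j ∈ s.erase i, a j ^ 2 = 0 := by omega
  refine ⟨i, hi, by omega, fun j hj hji => ?_⟩
  exact pow_eq_zero_iff two_ne_zero |>.1 <|
    (Finset.sum_eq_zero_iff_of_nonneg fun j _ => sq_nonneg _).1 hrest0 j (mem_erase.2 ⟨hji, hj⟩)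

theorem Module.Basis.apply_ne_neg_apply {ι R M : Type*} [Ring R] [NeZero (2 : R)]
    [AddCommGroup M] [Module R M] (b : Module.Basis ι R M) (i j : ι) : b i ≠ -b j := by
  classical
  intro h
  have h' := DFunLike.congr_fun (congrArg b.repr h) i
  rw [map_neg, b.repr_self, b.repr_self, Finsupp.neg_apply, Finsupp.single_eq_same,
    Finsupp.single_apply] at h'
  split_ifs at h' with hji
  · exact NeZero.ne (2 : R) (by rw [← one_add_one_eq_two]; exact eq_neg_iff_add_eq_zero.1 h')
  · exact NeZero.ne (2 : R) (by rw [← one_add_one_eq_two, h'.trans neg_zero, add_zero])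

theorem SimpleGraph.Reachable.of_forall_adj_imp {V : Type*} {G : SimpleGraph V} {P : V → Prop}
    (hP : ∀ u v, G.Adj u v → P u → P v) {u v : V} (h : G.Reachable u v) (hu : P u) : P v := by
  obtain ⟨w⟩ := h
  induction w with
  | nil => exact hu
  | cons huv _ ih => exact ih (hP _ _ huv hu)

structure IsAsymptoticallyOrthonormal {ι K : Type*} [AddCommGroup K] [Module ℤ[T;T⁻¹] K]
    (p : K →ₛₗ[toLaurentSeriesVinv] K →ₛₗ[toLaurentSeriesVinv] LaurentSeriesVinv)
    (b : Module.Basis ι ℤ[T;T⁻¹] K) : Prop where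
  orth : ∀ i j, i ≠ j → MemVinvIntPowerSeries (p (b i) (b j))
  norm : ∀ i, MemOnePlusVinv (p (b i) (b i))

section Pairing

variable {ι K : Type*} [AddCommGroup K] [Module ℤ[T;T⁻¹] K] {b : Module.Basis ι ℤ[T;T⁻¹] K}
  {p : K →ₛₗ[toLaurentSeriesVinv] K →ₛₗ[toLaurentSeriesVinv] LaurentSeriesVinv}

theorem IsAsymptoticallyOrthonormal.zero_le_orderTop (hb : IsAsymptoticallyOrthonormal p b)
    (i j : ι) : 0 ≤ (p (b i) (b j)).orderTop := by
  refine HahnSeries.le_orderTop_iff_forall.2 fun k hk => ?_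
  obtain rfl | hij := eq_or_ne i j
  · exact (hb.norm i).2 k (by exact_mod_cast hk)
  · exact hb.orth i j hij k (by exact_mod_cast hk.le)

theorem IsAsymptoticallyOrthonormal.coeff_zero [DecidableEq ι]
    (hb : IsAsymptoticallyOrthonormal p b) (i j : ι) :
    (p (b i) (b j)).coeff 0 = if i = j then 1 else 0 := by
  obtain rfl | hij := eq_or_ne i j
  · rw [if_pos rfl, (hb.norm i).1]
  · rw [if_neg hij, hb.orth i j hij 0 le_rfl]

theorem coeff_apply_self_eq_sum_sq (hb : IsAsymptoticallyOrthonormal p b) (x : K) (N : ℤ)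
    (hN : ∀ i m, N < m → (b.repr x i).coeff m = 0) :
    (p x x).coeff (-N + -N) = ∑ i ∈ (b.repr x).support, (b.repr x i).coeff N ^ 2 := by
  classical
  have hcoeff : ∀ i, ((-N : ℤ) : WithTop ℤ) ≤ (toLaurentSeriesVinv (b.repr x i)).orderTop :=
    fun i => HahnSeries.le_orderTop_iff_forall.2 fun k hk => by
      rw [coeff_toLaurentSeriesVinv]
      exact hN i _ (by have := WithTop.coe_lt_coe.1 hk; omega)
  rw [← LinearMap.sum_repr_mul_repr_mulₛₗ b b x x]
  simp only [Finsupp.sum, HahnSeries.coeff_sum, smul_eq_mul]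
  calc _ = ∑ i ∈ (b.repr x).support, ∑ j ∈ (b.repr x).support,
        (b.repr x i).coeff N * (b.repr x j).coeff N * if i = j then 1 else 0 := by
        refine Finset.sum_congr rfl fun i _ => Finset.sum_congr rfl fun j _ => ?_
        -- `cᵢ cⱼ (bᵢ‖bⱼ)` has order `≥ -2N`, so its coefficient there is a product of extremal ones
        rw [← mul_assoc, ← add_zero (-N + -N),
          HahnSeries.coeff_mul_add_of_le_orderTop
            ((add_le_add (hcoeff i) (hcoeff j)).trans HahnSeries.orderTop_add_le_mul)
            (hb.zero_le_orderTop i j),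
          HahnSeries.coeff_mul_add_of_le_orderTop (hcoeff i) (hcoeff j), hb.coeff_zero,
          coeff_toLaurentSeriesVinv, coeff_toLaurentSeriesVinv, neg_neg]
    _ = _ := Finset.sum_congr rfl fun i hi => by
        simp only [mul_ite, mul_one, mul_zero, Finset.sum_ite_eq, if_pos hi, sq]

theorem invert_repr_of_fixed (β : K →ₛₗ[(invert (R := ℤ)).toRingHom] K)
    (hfix : ∀ i, β (b i) = b i) {x : K} (hx : β x = x) (i : ι) :
    invert (b.repr x i) = b.repr x i := by
  have h : b.repr.symm (Finsupp.mapRange invert (map_zero _) (b.repr x)) =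
      b.repr.symm (b.repr x) := by
    rw [b.repr.symm_apply_apply, b.repr_symm_apply, Finsupp.linearCombination_apply,
      Finsupp.sum_mapRange_index (by simp)]
    conv_rhs => rw [← hx, ← b.linearCombination_repr x, Finsupp.linearCombination_apply,
      Finsupp.sum, map_sum]
    simp only [Finsupp.sum, LinearMap.map_smulₛₗ, hfix]
    rfl
  simpa using DFunLike.congr_fun (b.repr.symm.injective h) i

theorem coeff_repr_eq_zero_of_fixed (hb : IsAsymptoticallyOrthonormal p b)
    (β : K →ₛₗ[(invert (R := ℤ)).toRingHom] K) (hfix : ∀ i, β (b i) = b i)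
    {x : K} (hx : β x = x) (hxx : ∀ k < 0, (p x x).coeff k = 0) (i : ι) {m : ℤ} (hm : m ≠ 0) :
    (b.repr x i).coeff m = 0 := by
  classical
  suffices hpos : ∀ i m, 0 < m → (b.repr x i).coeff m = 0 by
    rcases hm.lt_or_gt with hm | hm
    · rw [← invert_repr_of_fixed β hfix hx, invert_apply]
      exact hpos i _ (neg_pos.2 hm)
    · exact hpos i m hm
  by_contra! h
  obtain ⟨i₀, m₀, hm₀, hne⟩ := h
  set D := (b.repr x).support.biUnion fun i => (b.repr x i).coeff.support
  have hmemD : ∀ i m, (b.repr x i).coeff m ≠ 0 → m ∈ D := fun i m hne =>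
    Finset.mem_biUnion.2 ⟨i, Finsupp.mem_support_iff.2 fun h => hne (by rw [h]; rfl),
      Finsupp.mem_support_iff.2 hne⟩
  set N := D.max' ⟨m₀, hmemD _ _ hne⟩
  have hN : ∀ i m, N < m → (b.repr x i).coeff m = 0 := fun i m h =>
    not_not.1 fun h' => (D.le_max' _ (hmemD _ _ h')).not_gt h
  obtain ⟨i₁, hi₁, hN₁⟩ := Finset.mem_biUnion.1 (D.max'_mem ⟨m₀, hmemD _ _ hne⟩)
  have hsum : 0 < ∑ i ∈ (b.repr x).support, (b.repr x i).coeff N ^ 2 :=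
    Finset.sum_pos' (fun _ _ => sq_nonneg _) ⟨i₁, hi₁, sq_pos_iff.2 (Finsupp.mem_support_iff.1 hN₁)⟩
  have hm₀N : m₀ ≤ N := D.le_max' _ (hmemD _ _ hne)
  rw [← coeff_apply_self_eq_sum_sq hb x N hN, hxx _ (by omega)] at hsum
  exact hsum.false

theorem eq_or_eq_neg_of_fixed (hb : IsAsymptoticallyOrthonormal p b)
    (β : K →ₛₗ[(invert (R := ℤ)).toRingHom] K) (hfix : ∀ i, β (b i) = b i)
    {x : K} (hx : β x = x) (hxx : MemOnePlusVinv (p x x)) : ∃ i, x = b i ∨ x = -b i := by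
  classical
  have hconst : ∀ i m, m ≠ 0 → (b.repr x i).coeff m = 0 :=
    fun i m => coeff_repr_eq_zero_of_fixed hb β hfix hx hxx.2 i
  have hsum : ∑ i ∈ (b.repr x).support, (b.repr x i).coeff 0 ^ 2 = 1 := by
    rw [← coeff_apply_self_eq_sum_sq hb x 0 fun i m hm => hconst i m hm.ne']
    exact hxx.1
  obtain ⟨i, -, hsq, hzero⟩ := Finset.exists_sq_eq_one_of_sum_sq_eq_one hsum
  have hC : ∀ j, b.repr x j = C ((b.repr x j).coeff 0) := fun j => by
    refine LaurentPolynomial.ext fun m => ?_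
    rw [← single_eq_C, AddMonoidAlgebra.coeff_single, Finsupp.single_apply]
    split_ifs with hm
    · rw [hm]
    · exact hconst j m (Ne.symm hm)
  have hrepr : b.repr x = Finsupp.single i (b.repr x i) := by
    refine Finsupp.ext fun j => ?_
    by_cases hji : j = i
    · rw [hji, Finsupp.single_eq_same]
    · rw [Finsupp.single_eq_of_ne hji]
      by_cases hj : j ∈ (b.repr x).support
      · rw [hC j, hzero j hj hji, map_zero]
      · exact Finsupp.notMem_support_iff.1 hj
  refine ⟨i, ?_⟩
  rw [← b.repr.symm_apply_apply x, hrepr, b.repr_symm_single, hC i]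
  rcases sq_eq_one_iff.1 hsq with h | h
  · left; rw [h, map_one, one_smul]
  · right; rw [h, map_neg, map_one, neg_one_smul]

end Pairing

theorem apply_mem_range_of_pairing_ne_zero {ι ι' K : Type*} [AddCommGroup K]
    [Module ℤ[T;T⁻¹] K] {b : Module.Basis ι ℤ[T;T⁻¹] K} {b' : Module.Basis ι' ℤ[T;T⁻¹] K}
    (p : K →ₗ[ℤ] K →ₗ[ℤ] LaurentSeriesVinv)
    (hpos : ∀ i j, ∀ k, 0 ≤ (p (b i) (b j)).coeff k)
    (hpos' : ∀ i j, ∀ k, 0 ≤ (p (b' i) (b' j)).coeff k)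
    (hsign : ∀ i, ∃ j, b i = b' j ∨ b i = -b' j) {u w : ι}
    (huw : p (b u) (b w) ≠ 0 ∨ p (b w) (b u) ≠ 0) (hu : b u ∈ Set.range b') :
    b w ∈ Set.range b' := by
  obtain ⟨j, hj⟩ := hu
  obtain ⟨k, hk | hk⟩ := hsign w
  · exact ⟨k, hk.symm⟩
  have h₁ : p (b u) (b w) = -p (b' j) (b' k) := by rw [← hj, hk, map_neg]
  have h₂ : p (b w) (b u) = -p (b' k) (b' j) := by rw [← hj, hk, map_neg, LinearMap.neg_apply]
  refine (huw.elim (· ?_) (· ?_)).elim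
  · exact HahnSeries.eq_zero_of_eq_neg_of_coeff_nonneg (hpos u w) (hpos' j k) h₁
  · exact HahnSeries.eq_zero_of_eq_neg_of_coeff_nonneg (hpos w u) (hpos' k j) h₂

instance : CharZero ℤ[T;T⁻¹] :=
  charZero_of_injective_algebraMap (FaithfulSMul.algebraMap_injective ℤ _)

theorem basis_uniqueness_from_positivity_general
    {ι ι' K : Type*} [AddCommGroup K] [Module (LaurentPolynomial ℤ) K]
    (b : Module.Basis ι (LaurentPolynomial ℤ) K) (b' : Module.Basis ι' (LaurentPolynomial ℤ) K)
    (p : K →ₗ[ℤ] K →ₗ[ℤ] LaurentSeriesVinv)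
    (hp₁ : ∀ x y : K, p ((T 1 : LaurentPolynomial ℤ) • x) y = vSer * p x y)
    (hp₂ : ∀ x y : K, p x ((T 1 : LaurentPolynomial ℤ) • y) = vSer * p x y)
    (β : K →+ K)
    (hβv : ∀ x : K, β ((T 1 : LaurentPolynomial ℤ) • x) = (T (-1) : LaurentPolynomial ℤ) • β x)
    -- both bases are asymptotically orthonormal
    (horth : ∀ i j : ι, i ≠ j → MemVinvIntPowerSeries (p (b i) (b j)))
    (hnorm : ∀ i : ι, MemOnePlusVinv (p (b i) (b i)))
    (horth' : ∀ i j : ι', i ≠ j → MemVinvIntPowerSeries (p (b' i) (b' j)))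
    (hnorm' : ∀ i : ι', MemOnePlusVinv (p (b' i) (b' i)))
    -- β fixes each element of both bases
    (hfix : ∀ i : ι, β (b i) = b i)
    (hfix' : ∀ i : ι', β (b' i) = b' i)
    -- nonnegativity of all coefficients of the pairings within each basis
    (hpos : ∀ i j : ι, ∀ k : ℤ, 0 ≤ (p (b i) (b j)).coeff k)
    (hpos' : ∀ i j : ι', ∀ k : ℤ, 0 ≤ (p (b' i) (b' j)).coeff k)
    -- connectedness of the pairing graph on B
    (hconn : (SimpleGraph.fromRel fun i j : ι => p (b i) (b j) ≠ 0).Connected)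
    -- the bases share a common element
    (hmeet : (Set.range ⇑b ∩ Set.range ⇑b').Nonempty) :
    Set.range ⇑b = Set.range ⇑b' := by
  let P := p.toVinvBilinear hp₁ hp₂
  let β' := β.toSemilinearOfMapTOneSmul (invert (R := ℤ)).toRingHom
    (by simpa using hβv)
  have hsign : ∀ i, ∃ j, b i = b' j ∨ b i = -b' j := fun i =>
    eq_or_eq_neg_of_fixed (p := P) ⟨horth', hnorm'⟩ β' hfix' (hfix i) (hnorm i)
  have hsign' : ∀ j, ∃ i, b' j = b i ∨ b' j = -b i := fun j =>
    eq_or_eq_neg_of_fixed (p := P) ⟨horth, hnorm⟩ β' hfix (hfix' j) (hnorm' j)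
  have hsub : ∀ i, b i ∈ Set.range b' := by
    obtain ⟨_, ⟨i₀, rfl⟩, hi₀⟩ := hmeet
    exact fun i => (hconn.preconnected i₀ i).of_forall_adj_imp (P := (b · ∈ Set.range b'))
      (fun u w huw => apply_mem_range_of_pairing_ne_zero p hpos hpos' hsign
        ((SimpleGraph.fromRel_adj _ _ _).1 huw).2) hi₀
  refine Set.Subset.antisymm (Set.range_subset_iff.2 hsub) (Set.range_subset_iff.2 fun j => ?_)
  obtain ⟨i, h | h⟩ := hsign' j
  · exact ⟨i, h.symm⟩
  · obtain ⟨k, hk⟩ := hsub i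
    exact absurd (h.trans (by rw [← hk])) (b'.apply_ne_neg_apply j k)

/-- Let `K` be a free `ℤ[v,v⁻¹]`-module with a `ℤ[v,v⁻¹]`-bilinear
pairing `p : K × K → ℤ((v⁻¹))` and an additive involution `β` with
`β (v • x) = v⁻¹ • β x`.  Let `B = {b i}` and `B' = {b' i'}` be two bases of `K`
such that: both are asymptotically orthonormal; `β` fixes every element of `B`
and of `B'`; all coefficients of the Laurent series `(b i ‖ b j)` and
`(b' i' ‖ b' j')` are nonnegative; the graph on `B` with an edge between distinct
`b i`, `b j` whenever the pairing `(b i ‖ b j)` (in either order) is nonzero is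
connected; and `B ∩ B' ≠ ∅`.  Then `B = B'`. -/
theorem basis_uniqueness_from_positivity
    {ι ι' K : Type*} [AddCommGroup K] [Module (LaurentPolynomial ℤ) K]
    (b : Module.Basis ι (LaurentPolynomial ℤ) K) (b' : Module.Basis ι' (LaurentPolynomial ℤ) K)
    (p : K →ₗ[ℤ] K →ₗ[ℤ] LaurentSeriesVinv)
    (hp₁ : ∀ x y : K, p ((T 1 : LaurentPolynomial ℤ) • x) y = vSer * p x y)
    (hp₂ : ∀ x y : K, p x ((T 1 : LaurentPolynomial ℤ) • y) = vSer * p x y)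
    (β : K →+ K)
    (hβ₂ : ∀ x : K, β (β x) = x)
    (hβv : ∀ x : K, β ((T 1 : LaurentPolynomial ℤ) • x) = (T (-1) : LaurentPolynomial ℤ) • β x)
    -- both bases are asymptotically orthonormal
    (horth : ∀ i j : ι, i ≠ j → MemVinvIntPowerSeries (p (b i) (b j)))
    (hnorm : ∀ i : ι, MemOnePlusVinv (p (b i) (b i)))
    (horth' : ∀ i j : ι', i ≠ j → MemVinvIntPowerSeries (p (b' i) (b' j)))
    (hnorm' : ∀ i : ι', MemOnePlusVinv (p (b' i) (b' i)))
    -- β fixes each element of both bases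
    (hfix : ∀ i : ι, β (b i) = b i)
    (hfix' : ∀ i : ι', β (b' i) = b' i)
    -- nonnegativity of all coefficients of the pairings within each basis
    (hpos : ∀ i j : ι, ∀ k : ℤ, 0 ≤ (p (b i) (b j)).coeff k)
    (hpos' : ∀ i j : ι', ∀ k : ℤ, 0 ≤ (p (b' i) (b' j)).coeff k)
    -- connectedness of the pairing graph on B
    (hconn : (SimpleGraph.fromRel fun i j : ι => p (b i) (b j) ≠ 0).Connected)
    -- the bases share a common element
    (hmeet : (Set.range ⇑b ∩ Set.range ⇑b').Nonempty) :
    Set.range ⇑b = Set.range ⇑b' :=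
  basis_uniqueness_from_positivity_general b b' p hp₁ hp₂ β hβv horth hnorm horth' hnorm' hfix hfix'
    hpos hpos' hconn hmeet
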